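/- Let M be a Riemannian manifold, V a conformal vector field with L_V g = λ g, and γ : I → M a unit-speed curve satisfying ∇_{γ'}γ' = q · (V ×γ') in an oriented 3-dimensional M. Then d/ds ⟨V(γ(s)), γ'(s)⟩ = λ(γ(s))/2, i.e., ⟨V(γ(s)),γ'(s)⟩ = (1/2)∫ λ(γ(t)) dt + const. -/

import Mathlib

def dot3 (u v : Fin 3 → ℝ) : ℝ := ∑ i, u i * v i

theorem dot3_eq_dotProduct (u v : Fin 3 → ℝ) : dot3 u v = u ⬝ᵥ v := rfl

theorem HasDerivAt.dotProduct {𝕜 ι : Type*} [NontriviallyNormedField 𝕜] [Fintype ι]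
    {u v : 𝕜 → ι → 𝕜} {u' v' : ι → 𝕜} {s : 𝕜}
    (hu : HasDerivAt u u' s) (hv : HasDerivAt v v' s) :
    HasDerivAt (fun t => u t ⬝ᵥ v t) (u' ⬝ᵥ v s + u s ⬝ᵥ v') s := by
  unfold _root_.dotProduct
  simp only [← Finset.sum_add_distrib]
  exact HasDerivAt.fun_sum fun i _ => (hasDerivAt_pi.mp hu i).mul (hasDerivAt_pi.mp hv i)

theorem dotProduct_apply_self_of_conformal {ι : Type*} [Fintype ι]
    (A : (ι → ℝ) → ι → ℝ) {c : ℝ} {u : ι → ℝ}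
    (hA : A u ⬝ᵥ u + u ⬝ᵥ A u = c * (u ⬝ᵥ u)) (hu : u ⬝ᵥ u = 1) :
    A u ⬝ᵥ u = c / 2 := by
  rw [dotProduct_comm u, hu, mul_one] at hA
  linarith

theorem stmt16_general (I : Set ℝ)
    (γ g g' : ℝ → (Fin 3 → ℝ))
    (V : (Fin 3 → ℝ) → (Fin 3 → ℝ))
    (V' : (Fin 3 → ℝ) → ((Fin 3 → ℝ) →L[ℝ] (Fin 3 → ℝ)))
    (lam : (Fin 3 → ℝ) → ℝ) (q : ℝ)
    (hV : ∀ x, HasFDerivAt V (V' x) x)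
    (hconf : ∀ x u w, dot3 (V' x u) w + dot3 u (V' x w) = lam x * dot3 u w)
    (hd1 : ∀ s ∈ I, HasDerivAt γ (g s) s)
    (hd2 : ∀ s ∈ I, HasDerivAt g (g' s) s)
    (hunit : ∀ s ∈ I, dot3 (g s) (g s) = 1)
    (heq : ∀ s ∈ I, g' s = q • crossProduct (V (γ s)) (g s)) :
    ∀ s ∈ I, HasDerivAt (fun t => dot3 (V (γ t)) (g t)) (lam (γ s) / 2) s := by
  intro s hs
  simp only [dot3_eq_dotProduct] at hconf hunit ⊢
  have hVγ : HasDerivAt (fun t => V (γ t)) (V' (γ s) (g s)) s :=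
    (hV (γ s)).comp_hasDerivAt s (hd1 s hs)
  have hV_perp_g' : V (γ s) ⬝ᵥ g' s = 0 := by
    rw [heq s hs, dotProduct_smul, dot_self_cross, smul_zero]
  have hV'_g : V' (γ s) (g s) ⬝ᵥ g s = lam (γ s) / 2 :=
    dotProduct_apply_self_of_conformal (V' (γ s))
      (hconf (γ s) (g s) (g s)) (hunit s hs)
  simpa only [hV'_g, hV_perp_g', add_zero] using hVγ.dotProduct (hd2 s hs)

/-- For a unit-speed conformal trajectory `γ` of a conformal vector field `V`
(with `L_V g = λ g`, i.e. `⟨∇ᵤV,w⟩ + ⟨u,∇_wV⟩ = λ⟨u,w⟩`) in the oriented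
Riemannian 3-manifold `ℝ³`, one has `d/ds ⟨V(γ(s)), γ'(s)⟩ = λ(γ(s))/2`. -/
theorem stmt16 (I : Set ℝ) (hI : IsOpen I)
    (γ g g' : ℝ → (Fin 3 → ℝ))
    (V : (Fin 3 → ℝ) → (Fin 3 → ℝ))
    (V' : (Fin 3 → ℝ) → ((Fin 3 → ℝ) →L[ℝ] (Fin 3 → ℝ)))
    (lam : (Fin 3 → ℝ) → ℝ) (q : ℝ)
    (hV : ∀ x, HasFDerivAt V (V' x) x)
    (hconf : ∀ x u w, dot3 (V' x u) w + dot3 u (V' x w) = lam x * dot3 u w)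
    (hd1 : ∀ s ∈ I, HasDerivAt γ (g s) s)
    (hd2 : ∀ s ∈ I, HasDerivAt g (g' s) s)
    (hunit : ∀ s ∈ I, dot3 (g s) (g s) = 1)
    (heq : ∀ s ∈ I, g' s = q • crossProduct (V (γ s)) (g s)) :
    ∀ s ∈ I, HasDerivAt (fun t => dot3 (V (γ t)) (g t)) (lam (γ s) / 2) s :=
  stmt16_general I γ g g' V V' lam q hV hconf hd1 hd2 hunit heq
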